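/- (Lemma 1, full statement.) Consider the storage scheduling LP with η < 1 and a time period t with C_t < 0. For any optimal solution: if the net charge β_t = s_t − ρ·s_{t−1} equals Δt·η^C·P^C_max or equals −Δt·(1/η^D)·P^D_max, then there is no simultaneous charge and discharge at t; otherwise (i.e., −Δt·(1/η^D)·P^D_max < β_t < Δt·η^C·P^C_max), simultaneous charge and discharge occurs at t in every optimal solution. -/

import Mathlib

/-!
At a period with negative price, raising the charge by `δ` and the discharge by `η δ` leaves the
state of charge unchanged but raises the revenue by `Δt · C_t · (η - 1) · δ > 0`. So at an optimum
one of the two powers is already at its maximum. If the net charge is extremal, the other power is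
forced to zero; if it is strictly between its extremes, the power not at its maximum is forced to
be positive.
-/

open Finset

def feasible (T : ℕ) (Δt ρ ηC ηD Slb Sub Sinit PC PD : ℝ)
    (s pC pD : ℕ → ℝ) : Prop :=
  s 0 = Sinit ∧
  (∀ t ∈ Icc 1 T, s t = ρ * s (t - 1) + Δt * (ηC * pC t - (1 / ηD) * pD t)) ∧
  (∀ t ∈ Icc 1 T, Slb ≤ s t ∧ s t ≤ Sub) ∧
  (∀ t ∈ Icc 1 T, 0 ≤ pC t ∧ pC t ≤ PC) ∧
  (∀ t ∈ Icc 1 T, 0 ≤ pD t ∧ pD t ≤ PD)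

def objective (T : ℕ) (Δt : ℝ) (C : ℕ → ℝ) (pC pD : ℕ → ℝ) : ℝ :=
  ∑ t ∈ Icc 1 T, Δt * C t * (pD t - pC t)

def optimal (T : ℕ) (Δt ρ ηC ηD Slb Sub Sinit PC PD : ℝ) (C : ℕ → ℝ)
    (s pC pD : ℕ → ℝ) : Prop :=
  feasible T Δt ρ ηC ηD Slb Sub Sinit PC PD s pC pD ∧
  ∀ s' pC' pD', feasible T Δt ρ ηC ηD Slb Sub Sinit PC PD s' pC' pD' →
    objective T Δt C pC' pD' ≤ objective T Δt C pC pD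

open Function

section

variable {T : ℕ} {Δt ρ ηC ηD Slb Sub Sinit PC PD : ℝ} {C s pC pD : ℕ → ℝ} {t : ℕ}

lemma feasible.net_charge_eq (h : feasible T Δt ρ ηC ηD Slb Sub Sinit PC PD s pC pD)
    (ht : t ∈ Icc 1 T) :
    s t - ρ * s (t - 1) = Δt * (ηC * pC t - 1 / ηD * pD t) := by
  rw [h.2.1 t ht]
  ring

lemma feasible.charge_bounds (h : feasible T Δt ρ ηC ηD Slb Sub Sinit PC PD s pC pD)
    (ht : t ∈ Icc 1 T) : 0 ≤ pC t ∧ pC t ≤ PC :=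
  h.2.2.2.1 t ht

lemma feasible.discharge_bounds (h : feasible T Δt ρ ηC ηD Slb Sub Sinit PC PD s pC pD)
    (ht : t ∈ Icc 1 T) : 0 ≤ pD t ∧ pD t ≤ PD :=
  h.2.2.2.2 t ht

lemma feasible.discharge_eq_zero_of_net_charge_eq_max
    (h : feasible T Δt ρ ηC ηD Slb Sub Sinit PC PD s pC pD) (ht : t ∈ Icc 1 T)
    (hΔt : 0 < Δt) (hηC : 0 < ηC) (hηD : 0 < ηD)
    (hβ : s t - ρ * s (t - 1) = Δt * ηC * PC) : pD t = 0 := by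
  have hnet := h.net_charge_eq ht
  obtain ⟨-, hpC⟩ := h.charge_bounds ht
  obtain ⟨hpD0, -⟩ := h.discharge_bounds ht
  have hηD' : 0 < 1 / ηD := by positivity
  have : Δt * (1 / ηD) * pD t = 0 := by
    linarith [mul_nonneg (mul_nonneg hΔt.le hηD'.le) hpD0,
      mul_nonneg (mul_nonneg hΔt.le hηC.le) (sub_nonneg.2 hpC)]
  exact (mul_eq_zero.1 this).resolve_left (by positivity)

lemma feasible.charge_eq_zero_of_net_charge_eq_min
    (h : feasible T Δt ρ ηC ηD Slb Sub Sinit PC PD s pC pD) (ht : t ∈ Icc 1 T)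
    (hΔt : 0 < Δt) (hηC : 0 < ηC) (hηD : 0 < ηD)
    (hβ : s t - ρ * s (t - 1) = -(Δt * (1 / ηD) * PD)) : pC t = 0 := by
  have hnet := h.net_charge_eq ht
  obtain ⟨hpC0, -⟩ := h.charge_bounds ht
  obtain ⟨-, hpD⟩ := h.discharge_bounds ht
  have hηD' : 0 < 1 / ηD := by positivity
  have : Δt * ηC * pC t = 0 := by
    linarith [mul_nonneg (mul_nonneg hΔt.le hηC.le) hpC0,
      mul_nonneg (mul_nonneg hΔt.le hηD'.le) (sub_nonneg.2 hpD)]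
  exact (mul_eq_zero.1 this).resolve_left (by positivity)

lemma feasible.discharge_pos_of_charge_eq_max
    (h : feasible T Δt ρ ηC ηD Slb Sub Sinit PC PD s pC pD) (ht : t ∈ Icc 1 T)
    (hΔt : 0 < Δt) (hηD : 0 < ηD) (hfull : pC t = PC)
    (hβ : s t - ρ * s (t - 1) < Δt * ηC * PC) : 0 < pD t := by
  have hnet := h.net_charge_eq ht
  rw [hfull] at hnet
  have : 0 < Δt * (1 / ηD) * pD t := by linarith
  exact pos_of_mul_pos_right this (by positivity)

lemma feasible.charge_pos_of_discharge_eq_max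
    (h : feasible T Δt ρ ηC ηD Slb Sub Sinit PC PD s pC pD) (ht : t ∈ Icc 1 T)
    (hΔt : 0 < Δt) (hηC : 0 < ηC) (hfull : pD t = PD)
    (hβ : -(Δt * (1 / ηD) * PD) < s t - ρ * s (t - 1)) : 0 < pC t := by
  have hnet := h.net_charge_eq ht
  rw [hfull] at hnet
  have : 0 < Δt * ηC * pC t := by linarith
  exact pos_of_mul_pos_right this (by positivity)

lemma feasible.update_of_net_eq (h : feasible T Δt ρ ηC ηD Slb Sub Sinit PC PD s pC pD)
    {a b : ℝ} (ha : 0 ≤ a ∧ a ≤ PC) (hb : 0 ≤ b ∧ b ≤ PD)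
    (hnet : ηC * a - 1 / ηD * b = ηC * pC t - 1 / ηD * pD t) :
    feasible T Δt ρ ηC ηD Slb Sub Sinit PC PD s (update pC t a) (update pD t b) := by
  obtain ⟨hs0, hdyn, hsb, hpC, hpD⟩ := h
  refine ⟨hs0, fun u hu => ?_, hsb, fun u hu => ?_, fun u hu => ?_⟩ <;>
    rcases eq_or_ne u t with rfl | hut <;>
    simp_all [update_of_ne]

lemma objective_update (ht : t ∈ Icc 1 T) (a b : ℝ) :
    objective T Δt C (update pC t a) (update pD t b) =
      objective T Δt C pC pD + Δt * C t * ((b - pD t) - (a - pC t)) := by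
  unfold objective
  rw [← sub_eq_iff_eq_add', ← sum_sub_distrib, sum_eq_single_of_mem t ht]
  · simp only [update_self]
    ring
  · intro u _ hut
    simp only [update_of_ne hut, sub_self]

lemma optimal.charge_eq_max_or_discharge_eq_max
    (hopt : optimal T Δt ρ ηC ηD Slb Sub Sinit PC PD C s pC pD) (ht : t ∈ Icc 1 T)
    (hCt : C t < 0) (hΔt : 0 < Δt) (hηC : 0 < ηC) (hηD : 0 < ηD) (hη : ηC * ηD < 1) :
    pC t = PC ∨ pD t = PD := by
  obtain ⟨hfeas, hmax⟩ := hopt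
  obtain ⟨hpC0, hpC⟩ := hfeas.charge_bounds ht
  obtain ⟨hpD0, hpD⟩ := hfeas.discharge_bounds ht
  by_contra! hlt
  have hpC' : pC t < PC := lt_of_le_of_ne hpC hlt.1
  have hpD' : pD t < PD := lt_of_le_of_ne hpD hlt.2
  have hη0 : 0 < ηC * ηD := mul_pos hηC hηD
  set δ := min (PC - pC t) ((PD - pD t) / (ηC * ηD))
  have hδ : 0 < δ := lt_min (by linarith) (div_pos (by linarith) hη0)
  have hδC : δ ≤ PC - pC t := min_le_left _ _
  have hδD : ηC * ηD * δ ≤ PD - pD t :=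
    (le_div_iff₀' hη0).mp (min_le_right _ _)
  have hnet : ηC * (pC t + δ) - 1 / ηD * (pD t + ηC * ηD * δ) = ηC * pC t - 1 / ηD * pD t := by
    field_simp
    ring
  have hfeas' := hfeas.update_of_net_eq (t := t) ⟨by linarith, by linarith⟩
    ⟨by positivity, by linarith⟩ hnet
  have hgain : 0 < Δt * C t * ((ηC * ηD - 1) * δ) :=
    mul_pos_of_neg_of_neg (mul_neg_of_pos_of_neg hΔt hCt)
      (mul_neg_of_neg_of_pos (by linarith) hδ)
  have := hmax _ _ _ hfeas'
  rw [objective_update ht] at this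
  linarith

end

theorem stmt7_general (T : ℕ) (Δt ρ ηC ηD Slb Sub Sinit PC PD : ℝ) (C : ℕ → ℝ)
    (hΔt : 0 < Δt)
    (hηC0 : 0 < ηC) (hηD0 : 0 < ηD)
    (hη : ηC * ηD < 1) (hPC : 0 < PC) (hPD : 0 < PD)
    (s pC pD : ℕ → ℝ)
    (hopt : optimal T Δt ρ ηC ηD Slb Sub Sinit PC PD C s pC pD)
    (t : ℕ) (ht : t ∈ Icc 1 T) (hCt : C t < 0) :
    ((s t - ρ * s (t - 1) = Δt * ηC * PC ∨
      s t - ρ * s (t - 1) = -(Δt * (1 / ηD) * PD)) → pC t * pD t = 0) ∧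
    ((-(Δt * (1 / ηD) * PD) < s t - ρ * s (t - 1) ∧
      s t - ρ * s (t - 1) < Δt * ηC * PC) → 0 < pC t ∧ 0 < pD t) := by
  have hfeas := hopt.1
  refine ⟨?_, fun ⟨hlo, hhi⟩ => ?_⟩
  · rintro (hβ | hβ)
    · rw [hfeas.discharge_eq_zero_of_net_charge_eq_max ht hΔt hηC0 hηD0 hβ, mul_zero]
    · rw [hfeas.charge_eq_zero_of_net_charge_eq_min ht hΔt hηC0 hηD0 hβ, zero_mul]
  · rcases hopt.charge_eq_max_or_discharge_eq_max ht hCt hΔt hηC0 hηD0 hη with hfull | hfull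
    · exact ⟨hfull ▸ hPC, hfeas.discharge_pos_of_charge_eq_max ht hΔt hηD0 hfull hhi⟩
    · exact ⟨hfeas.charge_pos_of_discharge_eq_max ht hΔt hηC0 hfull hlo, hfull ▸ hPD⟩

theorem stmt7 (T : ℕ) (Δt ρ ηC ηD Slb Sub Sinit PC PD : ℝ) (C : ℕ → ℝ)
    (hΔt : 0 < Δt) (hρ0 : 0 < ρ) (hρ1 : ρ ≤ 1)
    (hηC0 : 0 < ηC) (hηC1 : ηC ≤ 1) (hηD0 : 0 < ηD) (hηD1 : ηD ≤ 1)
    (hη : ηC * ηD < 1) (hPC : 0 < PC) (hPD : 0 < PD)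
    (s pC pD : ℕ → ℝ)
    (hopt : optimal T Δt ρ ηC ηD Slb Sub Sinit PC PD C s pC pD)
    (t : ℕ) (ht : t ∈ Icc 1 T) (hCt : C t < 0) :
    ((s t - ρ * s (t - 1) = Δt * ηC * PC ∨
      s t - ρ * s (t - 1) = -(Δt * (1 / ηD) * PD)) → pC t * pD t = 0) ∧
    ((-(Δt * (1 / ηD) * PD) < s t - ρ * s (t - 1) ∧
      s t - ρ * s (t - 1) < Δt * ηC * PC) → 0 < pC t ∧ 0 < pD t) :=
  stmt7_general T Δt ρ ηC ηD Slb Sub Sinit PC PD C hΔt hηC0 hηD0 hη hPC hPD s pC pD hopt t ht hCt
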